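/- arXiv:2305.00819 — 4 statements merged into one kernel-verified Lean document; each statement's English description precedes it below -/
import Mathlib

section
/- Let M be a finite-dimensional module over U_q(sl*₂,κ). Then there exist positive integers r and s such that Eʳ·M = 0 and Fˢ·M = 0; that is, the actions of E and F on M are nilpotent. -/
/-!
Conjugation by the invertible operator `K⁻¹` (resp. `K`) rescales `E` (resp. `F`) by `q²`, so
every eigenvalue `μ` of `E` on `M` comes with the eigenvalues `q²ᵏ μ` for all `k`. As `q` is not a
root of unity these are pairwise distinct when `μ ≠ 0`, which is impossible in finite dimension;
so `0` is the only eigenvalue of `E`, and over `ℂ` this makes `E` nilpotent. Likewise for `F`.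
-/

noncomputable section

/-- `q` is not a root of unity (in particular nonzero). -/
def NotRootOfUnity (q : ℂ) : Prop := q ≠ 0 ∧ ∀ n : ℕ, 0 < n → q ^ n ≠ 1

/-- Defining relations of the Hopf PBW-deformation `U_q(sl*₂, κ)`: generators
`0 = K`, `1 = K⁻¹`, `2 = E`, `3 = F`, relations `KK⁻¹ = K⁻¹K = 1`, `KE = q²EK`,
`KF = q⁻²FK`, `EF - FE = a(Kᵐ - K⁻ᵐ)`.  The case `a = 0` is `U_q(sl*₂)` itself. -/
inductive UqRel (q a : ℂ) (m : ℕ) : FreeAlgebra ℂ (Fin 4) → FreeAlgebra ℂ (Fin 4) → Prop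
  | KKinv : UqRel q a m (FreeAlgebra.ι ℂ 0 * FreeAlgebra.ι ℂ 1) 1
  | KinvK : UqRel q a m (FreeAlgebra.ι ℂ 1 * FreeAlgebra.ι ℂ 0) 1
  | KE : UqRel q a m (FreeAlgebra.ι ℂ 0 * FreeAlgebra.ι ℂ 2)
      (q ^ 2 • (FreeAlgebra.ι ℂ 2 * FreeAlgebra.ι ℂ 0))
  | KF : UqRel q a m (FreeAlgebra.ι ℂ 0 * FreeAlgebra.ι ℂ 3)
      ((q ^ 2)⁻¹ • (FreeAlgebra.ι ℂ 3 * FreeAlgebra.ι ℂ 0))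
  | EF : UqRel q a m (FreeAlgebra.ι ℂ 2 * FreeAlgebra.ι ℂ 3)
      (FreeAlgebra.ι ℂ 3 * FreeAlgebra.ι ℂ 2 +
        a • (FreeAlgebra.ι ℂ 0 ^ m - FreeAlgebra.ι ℂ 1 ^ m))

/-- The algebra `U_q(sl*₂, κ)`; `a = 0` gives the new type quantum group `U_q(sl*₂)`. -/
abbrev Uq (q a : ℂ) (m : ℕ) : Type := RingQuot (UqRel q a m)

def genK (q a : ℂ) (m : ℕ) : Uq q a m := RingQuot.mkAlgHom ℂ (UqRel q a m) (FreeAlgebra.ι ℂ 0)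
def genKinv (q a : ℂ) (m : ℕ) : Uq q a m := RingQuot.mkAlgHom ℂ (UqRel q a m) (FreeAlgebra.ι ℂ 1)
def genE (q a : ℂ) (m : ℕ) : Uq q a m := RingQuot.mkAlgHom ℂ (UqRel q a m) (FreeAlgebra.ι ℂ 2)
def genF (q a : ℂ) (m : ℕ) : Uq q a m := RingQuot.mkAlgHom ℂ (UqRel q a m) (FreeAlgebra.ι ℂ 3)

theorem NotRootOfUnity.pow {c : ℂ} (hc : NotRootOfUnity c) {n : ℕ} (hn : n ≠ 0) :
    NotRootOfUnity (c ^ n) :=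
  ⟨pow_ne_zero n hc.1, fun k hk => by
    rw [← pow_mul]
    exact hc.2 (n * k) (Nat.mul_pos (Nat.pos_of_ne_zero hn) hk)⟩

theorem NotRootOfUnity.pow_injective {c : ℂ} (hc : NotRootOfUnity c) :
    Function.Injective (c ^ · : ℕ → ℂ) := by
  set u := Units.mk0 c hc.1
  have hu : ¬IsOfFinOrder u := by
    rw [isOfFinOrder_iff_pow_eq_one]
    rintro ⟨n, hn, hun⟩
    exact hc.2 n hn (by simpa [u] using congrArg Units.val hun)
  intro k l hkl
  exact injective_pow_iff_not_isOfFinOrder.2 hu (Units.ext (by simpa [u] using hkl))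

namespace Module.End

theorem HasEigenvalue.smul_mul_of_mul_eq_smul_mul {R M : Type*} [CommRing R] [AddCommGroup M]
    [Module R M] {S T : End R M} (hT : Function.Injective T) {c μ : R}
    (hST : S * T = c • (T * S)) (hμ : S.HasEigenvalue μ) : S.HasEigenvalue (c * μ) := by
  obtain ⟨v, hv⟩ := hμ.exists_hasEigenvector
  have hTv : S (T v) = (c * μ) • T v := by
    rw [← Module.End.mul_apply, hST, LinearMap.smul_apply, Module.End.mul_apply, hv.apply_eq_smul,
      map_smul, smul_smul]
  exact hasEigenvalue_of_hasEigenvector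
    ⟨mem_eigenspace_iff.2 hTv, fun h => hv.2 (hT (h.trans (map_zero T).symm))⟩

theorem isNilpotent_of_forall_hasEigenvalue_eq_zero {K V : Type*} [Field K] [IsAlgClosed K]
    [AddCommGroup V] [Module K V] [FiniteDimensional K V] {f : End K V}
    (hf : ∀ μ, f.HasEigenvalue μ → μ = 0) : IsNilpotent f := by
  set p := minpoly K f
  have hroots : p.roots = Multiset.replicate (Multiset.card p.roots) 0 :=
    Multiset.eq_replicate_card.2 fun μ hμ =>
      hf μ (hasEigenvalue_of_isRoot (Polynomial.isRoot_of_mem_roots hμ))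
  have hp : p = Polynomial.X ^ Multiset.card p.roots := by
    conv_lhs => rw [(IsAlgClosed.splits p).eq_prod_roots_of_monic
      (minpoly.monic (Algebra.IsIntegral.isIntegral f)), hroots]
    simp
  refine ⟨Multiset.card p.roots, ?_⟩
  have h0 : Polynomial.aeval f p = 0 := minpoly.aeval K f
  rwa [hp, map_pow, Polynomial.aeval_X] at h0

variable {V : Type*} [AddCommGroup V] [Module ℂ V] [FiniteDimensional ℂ V]

theorem eq_zero_of_hasEigenvalue_of_mul_eq_smul_mul {S T : End ℂ V}
    (hT : Function.Injective T) {c μ : ℂ} (hc : NotRootOfUnity c) (hST : S * T = c • (T * S))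
    (hμ : S.HasEigenvalue μ) : μ = 0 := by
  by_contra hμ0
  have horbit : ∀ k : ℕ, S.HasEigenvalue (c ^ k * μ) := by
    intro k
    induction k with
    | zero => simpa using hμ
    | succ k ih => simpa [pow_succ', mul_assoc] using ih.smul_mul_of_mul_eq_smul_mul hT hST
  have hinj : Function.Injective fun k : ℕ => c ^ k * μ :=
    fun k l hkl => hc.pow_injective (mul_right_cancel₀ hμ0 hkl)
  exact Set.infinite_of_injective_forall_mem hinj horbit (finite_hasEigenvalue S)

theorem isNilpotent_of_mul_eq_smul_mul {S T : End ℂ V} (hT : Function.Injective T) {c : ℂ}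
    (hc : NotRootOfUnity c) (hST : S * T = c • (T * S)) : IsNilpotent S :=
  isNilpotent_of_forall_hasEigenvalue_eq_zero fun _ =>
    eq_zero_of_hasEigenvalue_of_mul_eq_smul_mul hT hc hST

end Module.End

section Relations

variable (q a : ℂ) (m : ℕ)

theorem genKinv_mul_genK : genKinv q a m * genK q a m = 1 := by
  simpa [genK, genKinv] using RingQuot.mkAlgHom_rel ℂ (UqRel.KinvK (q := q) (a := a) (m := m))

theorem genK_mul_genKinv : genK q a m * genKinv q a m = 1 := by
  simpa [genK, genKinv] using RingQuot.mkAlgHom_rel ℂ (UqRel.KKinv (q := q) (a := a) (m := m))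

theorem genK_mul_genE : genK q a m * genE q a m = q ^ 2 • (genE q a m * genK q a m) := by
  simpa [genK, genE] using RingQuot.mkAlgHom_rel ℂ (UqRel.KE (q := q) (a := a) (m := m))

theorem genK_mul_genF : genK q a m * genF q a m = (q ^ 2)⁻¹ • (genF q a m * genK q a m) := by
  simpa [genK, genF] using RingQuot.mkAlgHom_rel ℂ (UqRel.KF (q := q) (a := a) (m := m))

theorem isUnit_genK : IsUnit (genK q a m) :=
  ⟨⟨_, _, genK_mul_genKinv q a m, genKinv_mul_genK q a m⟩, rfl⟩

theorem isUnit_genKinv : IsUnit (genKinv q a m) :=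
  ⟨⟨_, _, genKinv_mul_genK q a m, genK_mul_genKinv q a m⟩, rfl⟩

theorem genE_mul_genKinv : genE q a m * genKinv q a m = q ^ 2 • (genKinv q a m * genE q a m) := by
  calc genE q a m * genKinv q a m
      = genKinv q a m * (genK q a m * genE q a m) * genKinv q a m := by
        rw [← mul_assoc, genKinv_mul_genK, one_mul]
    _ = q ^ 2 • (genKinv q a m * genE q a m) := by
        rw [genK_mul_genE, mul_smul_comm, smul_mul_assoc, mul_assoc, mul_assoc, genK_mul_genKinv,
          mul_one]

theorem genF_mul_genK (hq : q ≠ 0) :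
    genF q a m * genK q a m = q ^ 2 • (genK q a m * genF q a m) := by
  rw [genK_mul_genF, smul_smul, mul_inv_cancel₀ (pow_ne_zero 2 hq), one_smul]

end Relations

theorem exists_pos_pow_smul_eq_zero_of_isNilpotent {R A M : Type*} [CommSemiring R] [Semiring A]
    [Algebra R A] [AddCommMonoid M] [Module R M] [Module A M] [IsScalarTower R A M] {x : A}
    (hx : IsNilpotent (Algebra.lsmul R R M x)) : ∃ r, 0 < r ∧ ∀ v : M, x ^ r • v = 0 := by
  obtain ⟨n, hn⟩ := hx
  refine ⟨n + 1, n.succ_pos, fun v => ?_⟩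
  rw [pow_succ, mul_smul]
  have hxn : Algebra.lsmul R R M (x ^ n) = 0 := by rw [map_pow, hn]
  exact LinearMap.congr_fun hxn (x • v)

theorem stmt2_general (q a : ℂ) (m : ℕ) (hq : NotRootOfUnity q)
    (M : Type) [AddCommGroup M] [Module ℂ M] [Module (Uq q a m) M]
    [IsScalarTower ℂ (Uq q a m) M] [FiniteDimensional ℂ M] :
    ∃ r s : ℕ, 0 < r ∧ 0 < s ∧
      (∀ v : M, genE q a m ^ r • v = 0) ∧ (∀ v : M, genF q a m ^ s • v = 0) := by
  let ρ := Algebra.lsmul ℂ ℂ M (A := Uq q a m)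
  have hq2 : NotRootOfUnity (q ^ 2) := hq.pow two_ne_zero
  have hK : Function.Injective (ρ (genK q a m)) :=
    ((Module.End.isUnit_iff _).1 ((isUnit_genK q a m).map ρ)).1
  have hKinv : Function.Injective (ρ (genKinv q a m)) :=
    ((Module.End.isUnit_iff _).1 ((isUnit_genKinv q a m).map ρ)).1
  have hE : IsNilpotent (ρ (genE q a m)) :=
    Module.End.isNilpotent_of_mul_eq_smul_mul hKinv hq2
      (by rw [← map_mul, genE_mul_genKinv, map_smul, map_mul])
  have hF : IsNilpotent (ρ (genF q a m)) :=
    Module.End.isNilpotent_of_mul_eq_smul_mul hK hq2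
      (by rw [← map_mul, genF_mul_genK q a m hq.1, map_smul, map_mul])
  obtain ⟨r, hr, hEr⟩ := exists_pos_pow_smul_eq_zero_of_isNilpotent hE
  obtain ⟨s, hs, hFs⟩ := exists_pos_pow_smul_eq_zero_of_isNilpotent hF
  exact ⟨r, s, hr, hs, hEr, hFs⟩

/-- on a finite-dimensional `U_q(sl*₂,κ)`-module, the actions of `E`
and `F` are nilpotent. -/
theorem stmt2 (q a : ℂ) (m : ℕ) (hm : 0 < m) (hq : NotRootOfUnity q)
    (M : Type) [AddCommGroup M] [Module ℂ M] [Module (Uq q a m) M]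
    [IsScalarTower ℂ (Uq q a m) M] [FiniteDimensional ℂ M] :
    ∃ r s : ℕ, 0 < r ∧ 0 < s ∧
      (∀ v : M, genE q a m ^ r • v = 0) ∧ (∀ v : M, genF q a m ^ s • v = 0) :=
  stmt2_general q a m hq M

end
end

section
/- Every finite-dimensional simple module M over U_q(sl*₂) is one-dimensional, with K acting by some scalar λ ∈ ℂ× and E, F acting by zero. -/
noncomputable section

/-! Since `K` is invertible and `KE = q²EK`, taking determinants shows that `E` cannot act
invertibly on a module of dimension `d > 0`: that would force `q^(2d) = 1`. The kernel of `E`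
is stable under `K^{±1}`, `E` and `F`, so in a simple module it is everything, i.e. `E` acts
by zero; likewise `F`. Then an eigenspace of `K` is a submodule, so `K` acts by a scalar, and
every subspace is a submodule. -/

theorem LinearMap.ker_ne_bot_of_mul_eq_smul_mul {K V : Type*} [Field K] [AddCommGroup V]
    [Module K V] [FiniteDimensional K V] {k g : V →ₗ[K] V} {r : K} (hk : IsUnit k)
    (hr : r ^ Module.finrank K V ≠ 1) (h : k * g = r • (g * k)) : ker g ≠ ⊥ := by
  intro hg
  have hdk := (isUnit_iff_isUnit_det k).1 hk
  have hdg := (isUnit_iff_isUnit_det g).1 ((isUnit_iff_ker_eq_bot g).2 hg)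
  have hdet := congrArg LinearMap.det h
  rw [map_mul, det_smul, map_mul, mul_comm (LinearMap.det g)] at hdet
  exact hr ((mul_eq_right₀ (hdk.mul hdg).ne_zero).1 hdet.symm)

theorem smul_smul_eq_zero_of_mul_eq_smul_mul {R A M : Type*} [Field R] [Ring A] [Algebra R A]
    [AddCommGroup M] [Module R M] [Module A M] [IsScalarTower R A M] {x g : A} {r : R}
    (hr : r ≠ 0) (h : x * g = r • (g * x)) {v : M} (hv : g • v = 0) : g • x • v = 0 := by
  have : r • g • x • v = 0 := by
    rw [← mul_smul, ← smul_assoc, ← h, mul_smul, hv, smul_zero]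
  exact (smul_eq_zero.1 this).resolve_left hr

namespace Uq

variable {q a : ℂ} {m : ℕ}

theorem genK_mul_genKinv : genK q a m * genKinv q a m = 1 := by
  simpa only [genK, genKinv, map_mul, map_one] using
    RingQuot.mkAlgHom_rel ℂ (UqRel.KKinv (q := q) (a := a) (m := m))

theorem genKinv_mul_genK : genKinv q a m * genK q a m = 1 := by
  simpa only [genK, genKinv, map_mul, map_one] using
    RingQuot.mkAlgHom_rel ℂ (UqRel.KinvK (q := q) (a := a) (m := m))

theorem genK_mul_genE : genK q a m * genE q a m = q ^ 2 • (genE q a m * genK q a m) := by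
  simpa only [genK, genE, map_mul, map_smul] using
    RingQuot.mkAlgHom_rel ℂ (UqRel.KE (q := q) (a := a) (m := m))

theorem genK_mul_genF : genK q a m * genF q a m = (q ^ 2)⁻¹ • (genF q a m * genK q a m) := by
  simpa only [genK, genF, map_mul, map_smul] using
    RingQuot.mkAlgHom_rel ℂ (UqRel.KF (q := q) (a := a) (m := m))

theorem commute_genE_genF : Commute (genE q 0 m) (genF q 0 m) := by
  simpa [genE, genF, Commute, SemiconjBy] using
    RingQuot.mkAlgHom_rel ℂ (UqRel.EF (q := q) (a := 0) (m := m))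

theorem isUnit_genK : IsUnit (genK q a m) :=
  ⟨⟨genK q a m, genKinv q a m, genK_mul_genKinv, genKinv_mul_genK⟩, rfl⟩

theorem genKinv_mul_eq_of_genK_mul_eq {g : Uq q a m} {r : ℂ} (hr : r ≠ 0)
    (h : genK q a m * g = r • (g * genK q a m)) :
    genKinv q a m * g = r⁻¹ • (g * genKinv q a m) := by
  have hgK : g * genK q a m = r⁻¹ • (genK q a m * g) := by
    rw [h, smul_smul, inv_mul_cancel₀ hr, one_smul]
  calc genKinv q a m * g = genKinv q a m * (g * genK q a m) * genKinv q a m := by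
        rw [mul_assoc, mul_assoc, genK_mul_genKinv, mul_one]
    _ = r⁻¹ • (g * genKinv q a m) := by
        rw [hgK, mul_smul_comm, smul_mul_assoc, ← mul_assoc, genKinv_mul_genK, one_mul]

section Module

variable {M : Type*} [AddCommGroup M] [Module (Uq q a m) M]

theorem genK_smul_genKinv_smul (v : M) : genK q a m • genKinv q a m • v = v := by
  rw [← mul_smul, genK_mul_genKinv, one_smul]

theorem genKinv_smul_genK_smul (v : M) : genKinv q a m • genK q a m • v = v := by
  rw [← mul_smul, genKinv_mul_genK, one_smul]

variable [Module ℂ M]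

theorem smul_genKinv_smul {lam : ℂ} (hK : ∀ v : M, genK q a m • v = lam • v) (v : M) :
    lam • genKinv q a m • v = v := by
  rw [← hK, genK_smul_genKinv_smul]

theorem ne_zero_of_genK_smul_eq [Nontrivial M] {lam : ℂ}
    (hK : ∀ v : M, genK q a m • v = lam • v) : lam ≠ 0 := by
  obtain ⟨v, hv⟩ := exists_ne (0 : M)
  rintro rfl
  exact hv (by rw [← smul_genKinv_smul hK v, zero_smul])

theorem genKinv_smul_eq {lam : ℂ} (hlam : lam ≠ 0) (hK : ∀ v : M, genK q a m • v = lam • v)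
    (v : M) : genKinv q a m • v = lam⁻¹ • v :=
  (eq_inv_smul_iff₀ hlam).2 (smul_genKinv_smul hK v)

variable [IsScalarTower ℂ (Uq q a m) M]

theorem smul_mem_of_gens (p : Submodule ℂ M) (hK : ∀ v ∈ p, genK q a m • v ∈ p)
    (hKinv : ∀ v ∈ p, genKinv q a m • v ∈ p) (hE : ∀ v ∈ p, genE q a m • v ∈ p)
    (hF : ∀ v ∈ p, genF q a m • v ∈ p) (u : Uq q a m) : ∀ v ∈ p, u • v ∈ p := by
  obtain ⟨x, rfl⟩ := RingQuot.mkAlgHom_surjective ℂ (UqRel q a m) u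
  induction x with
  | grade0 c =>
    intro v hv
    rw [AlgHom.commutes, algebraMap_smul]
    exact p.smul_mem c hv
  | grade1 i => fin_cases i <;> assumption
  | mul x y hx hy =>
    intro v hv
    rw [map_mul, mul_smul]
    exact hx _ (hy v hv)
  | add x y hx hy =>
    intro v hv
    rw [map_add, add_smul]
    exact p.add_mem (hx v hv) (hy v hv)

variable [IsSimpleModule (Uq q a m) M]

theorem eq_bot_or_eq_top_of_gens (p : Submodule ℂ M)
    (hK : ∀ v ∈ p, genK q a m • v ∈ p) (hKinv : ∀ v ∈ p, genKinv q a m • v ∈ p)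
    (hE : ∀ v ∈ p, genE q a m • v ∈ p) (hF : ∀ v ∈ p, genF q a m • v ∈ p) :
    p = ⊥ ∨ p = ⊤ := by
  let N : Submodule (Uq q a m) M :=
    { p with smul_mem' := fun u v hv => smul_mem_of_gens p hK hKinv hE hF u v hv }
  have hN : N.restrictScalars ℂ = p := rfl
  rcases IsSimpleOrder.eq_bot_or_eq_top N with h | h
  · exact Or.inl (by rw [← hN, h, Submodule.restrictScalars_bot])
  · exact Or.inr (by rw [← hN, h, Submodule.restrictScalars_top])

theorem finrank_eq_one_of_genK_smul_eq {lam : ℂ} (hlam : lam ≠ 0)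
    (hK : ∀ v : M, genK q a m • v = lam • v) (hE : ∀ v : M, genE q a m • v = 0)
    (hF : ∀ v : M, genF q a m • v = 0) : Module.finrank ℂ M = 1 := by
  have : Nontrivial M := IsSimpleModule.nontrivial (Uq q a m) M
  refine isSimpleModule_iff_finrank_eq_one.1
    ((isSimpleModule_iff ℂ M).2
      ⟨fun p => eq_bot_or_eq_top_of_gens (q := q) (a := a) (m := m) p ?_ ?_ ?_ ?_⟩)
  · exact fun v hv => hK v ▸ p.smul_mem lam hv
  · exact fun v hv => genKinv_smul_eq hlam hK v ▸ p.smul_mem _ hv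
  · exact fun v _ => hE v ▸ p.zero_mem
  · exact fun v _ => hF v ▸ p.zero_mem

variable [FiniteDimensional ℂ M]

theorem smul_eq_zero_of_genK_mul_eq {g : Uq q a m} {r : ℂ} (hr0 : r ≠ 0)
    (hr : r ^ Module.finrank ℂ M ≠ 1) (hKg : genK q a m * g = r • (g * genK q a m))
    (hgE : Commute g (genE q a m)) (hgF : Commute g (genF q a m)) (v : M) : g • v = 0 := by
  let ρ := Algebra.lsmul ℂ ℂ M (A := Uq q a m)
  have hker : LinearMap.ker (ρ g) ≠ ⊥ :=
    LinearMap.ker_ne_bot_of_mul_eq_smul_mul (isUnit_genK.map ρ) hr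
      (by rw [← map_mul, hKg, map_smul, map_mul])
  have hcomm {x : Uq q a m} (hx : Commute g x) {w : M} (hw : g • w = 0) : g • x • w = 0 := by
    rw [← mul_smul, hx.eq, mul_smul, hw, smul_zero]
  have htop : LinearMap.ker (ρ g) = ⊤ :=
    (eq_bot_or_eq_top_of_gens _
      (fun _ => smul_smul_eq_zero_of_mul_eq_smul_mul hr0 hKg)
      (fun _ => smul_smul_eq_zero_of_mul_eq_smul_mul (inv_ne_zero hr0)
        (genKinv_mul_eq_of_genK_mul_eq hr0 hKg))
      (fun _ => hcomm hgE) (fun _ => hcomm hgF)).resolve_left hker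
  exact LinearMap.mem_ker.1 (htop ▸ Submodule.mem_top : v ∈ LinearMap.ker (ρ g))

theorem exists_genK_smul_eq (hE : ∀ v : M, genE q a m • v = 0)
    (hF : ∀ v : M, genF q a m • v = 0) : ∃ lam : ℂ, ∀ v : M, genK q a m • v = lam • v := by
  have : Nontrivial M := IsSimpleModule.nontrivial (Uq q a m) M
  obtain ⟨lam, hlam⟩ := Module.End.exists_eigenvalue (Algebra.lsmul ℂ ℂ M (genK q a m))
  have hmem {v : M} : v ∈ (Algebra.lsmul ℂ ℂ M (genK q a m)).eigenspace lam ↔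
      genK q a m • v = lam • v := Module.End.mem_eigenspace_iff
  have htop := (eq_bot_or_eq_top_of_gens _
    (fun v hv => hmem.2 (by rw [hmem.1 hv, smul_comm (genK q a m) lam v, hmem.1 hv]))
    (fun v hv => hmem.2 <| by
      rw [genK_smul_genKinv_smul, smul_comm, ← hmem.1 hv, genKinv_smul_genK_smul])
    (fun v _ => hE v ▸ Submodule.zero_mem _)
    (fun v _ => hF v ▸ Submodule.zero_mem _)).resolve_left hlam
  exact ⟨lam, fun v => hmem.1 (htop ▸ Submodule.mem_top)⟩

end Module

end Uq

/-- every finite-dimensional simple `U_q(sl*₂)`-module is one-dimensional,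
with `K` acting by a nonzero scalar and `E`, `F` acting by zero. -/
theorem stmt3 (q : ℂ) (hq : NotRootOfUnity q)
    (M : Type) [AddCommGroup M] [Module ℂ M] [Module (Uq q 0 1) M]
    [IsScalarTower ℂ (Uq q 0 1) M] [FiniteDimensional ℂ M]
    (hsimple : IsSimpleModule (Uq q 0 1) M) :
    Module.finrank ℂ M = 1 ∧
      ∃ lam : ℂ, lam ≠ 0 ∧ ∀ v : M,
        genK q 0 1 • v = lam • v ∧ genE q 0 1 • v = 0 ∧ genF q 0 1 • v = 0 := by
  obtain ⟨hq0, hq⟩ := hq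
  have : Nontrivial M := IsSimpleModule.nontrivial (Uq q 0 1) M
  have hq2 : (q ^ 2) ^ Module.finrank ℂ M ≠ 1 := by
    rw [← pow_mul]
    exact hq _ (Nat.mul_pos two_pos Module.finrank_pos)
  have hE : ∀ v : M, genE q 0 1 • v = 0 :=
    Uq.smul_eq_zero_of_genK_mul_eq (pow_ne_zero 2 hq0) hq2 Uq.genK_mul_genE (.refl _)
      Uq.commute_genE_genF
  have hF : ∀ v : M, genF q 0 1 • v = 0 :=
    Uq.smul_eq_zero_of_genK_mul_eq (inv_ne_zero (pow_ne_zero 2 hq0))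
      (by rwa [inv_pow, inv_ne_one]) Uq.genK_mul_genF Uq.commute_genE_genF.symm (.refl _)
  obtain ⟨lam, hK⟩ := Uq.exists_genK_smul_eq hE hF
  have hlam : lam ≠ 0 := Uq.ne_zero_of_genK_smul_eq hK
  exact ⟨Uq.finrank_eq_one_of_genK_smul_eq hlam hK hE hF, lam, hlam,
    fun v => ⟨hK v, hE v, hF v⟩⟩

end
end

section
/- The category of finite-dimensional modules over U_q(sl*₂) is not semisimple; concretely, there exists a two-dimensional U_q(sl*₂)-module that is not a direct sum of simple modules. -/
/-!
On `ℂ²`, `K = diag(1, q²)`, `K⁻¹ = diag(1, q⁻²)`, `E = e₂₁` and `F = 0` define a module over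
`U_q(sl*₂)`. The line `ℂ e₂` is invariant but has no invariant complement: `E` sends every vector
off the line to a nonzero vector on it.
-/

noncomputable section

theorem not_isSemisimpleModule_of_smul_mem {A M : Type*} [Ring A] [AddCommGroup M] [Module A M]
    {N : Submodule A M} (hN : N ≠ ⊤) (e : A) (h_range : ∀ x, e • x ∈ N)
    (h_ker : ∀ x, e • x = 0 → x ∈ N) : ¬ IsSemisimpleModule A M := by
  intro _
  obtain ⟨N', hc⟩ := exists_isCompl N
  obtain ⟨z, hz, hz0⟩ := N'.ne_bot_iff.mp fun h ↦ hN (eq_top_of_isCompl_bot (h ▸ hc))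
  have h_disj := Submodule.disjoint_def.mp hc.disjoint
  exact hz0 (h_disj z (h_ker z (h_disj _ (h_range z) (N'.smul_mem e hz))) hz)

theorem FreeAlgebra.lift_mem_invtSubmodule {R X V : Type*} [CommSemiring R] [AddCommMonoid V]
    [Module R V] (g : X → Module.End R V) {p : Submodule R V}
    (hg : ∀ i, p ∈ (g i).invtSubmodule) (x : FreeAlgebra R X) :
    p ∈ (FreeAlgebra.lift R g x).invtSubmodule := by
  induction x with
  | grade0 r =>
    rw [AlgHom.commutes]
    exact fun v hv ↦ by simpa [Module.algebraMap_end_apply] using p.smul_mem r hv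
  | grade1 i => simpa using hg i
  | add x y hx hy =>
    rw [map_add]
    exact Module.End.invtSubmodule_inf_invtSubmodule_le_invtSubmodule_add _ _ ⟨hx, hy⟩
  | mul x y hx hy => rw [map_mul]; exact fun v hv ↦ hx (hy hv)

namespace Uq

variable (q : ℂ)

def twoDimK : Module.End ℂ (ℂ × ℂ) := LinearMap.prodMap LinearMap.id (q ^ 2 • LinearMap.id)

def twoDimKinv : Module.End ℂ (ℂ × ℂ) := LinearMap.prodMap LinearMap.id ((q ^ 2)⁻¹ • LinearMap.id)

def twoDimE : Module.End ℂ (ℂ × ℂ) := (LinearMap.inr ℂ ℂ ℂ).comp (LinearMap.fst ℂ ℂ ℂ)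

@[simp] lemma twoDimK_apply (p : ℂ × ℂ) : twoDimK q p = (p.1, q ^ 2 * p.2) := rfl
@[simp] lemma twoDimKinv_apply (p : ℂ × ℂ) : twoDimKinv q p = (p.1, (q ^ 2)⁻¹ * p.2) := rfl
@[simp] lemma twoDimE_apply (p : ℂ × ℂ) : twoDimE p = (0, p.1) := rfl

def twoDimGens : Fin 4 → Module.End ℂ (ℂ × ℂ) := ![twoDimK q, twoDimKinv q, twoDimE, 0]

variable {q}

lemma twoDimGens_respects_rel (hq : q ≠ 0) ⦃x y : FreeAlgebra ℂ (Fin 4)⦄ (h : UqRel q 0 1 x y) :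
    FreeAlgebra.lift ℂ (twoDimGens q) x = FreeAlgebra.lift ℂ (twoDimGens q) y := by
  have hq2 : q ^ 2 ≠ 0 := pow_ne_zero 2 hq
  cases h <;> ext <;> simp [twoDimGens, Module.End.mul_apply, hq2]

def twoDimRep (hq : q ≠ 0) : Uq q 0 1 →ₐ[ℂ] Module.End ℂ (ℂ × ℂ) :=
  RingQuot.liftAlgHom ℂ ⟨FreeAlgebra.lift ℂ (twoDimGens q), twoDimGens_respects_rel hq⟩

lemma twoDimRep_mkAlgHom (hq : q ≠ 0) (x : FreeAlgebra ℂ (Fin 4)) :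
    twoDimRep hq (RingQuot.mkAlgHom ℂ (UqRel q 0 1) x) = FreeAlgebra.lift ℂ (twoDimGens q) x :=
  RingQuot.liftAlgHom_mkAlgHom_apply _ _ _ _

@[simp] lemma twoDimRep_genE (hq : q ≠ 0) : twoDimRep hq (genE q 0 1) = twoDimE := by
  rw [genE, twoDimRep_mkAlgHom]; simp [twoDimGens]

lemma ker_fst_mem_invtSubmodule_twoDimRep (hq : q ≠ 0) (u : Uq q 0 1) :
    LinearMap.ker (LinearMap.fst ℂ ℂ ℂ) ∈ (twoDimRep hq u).invtSubmodule := by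
  obtain ⟨x, rfl⟩ := RingQuot.mkAlgHom_surjective ℂ (UqRel q 0 1) u
  rw [twoDimRep_mkAlgHom]
  apply FreeAlgebra.lift_mem_invtSubmodule
  intro i
  fin_cases i <;> intro p hp <;> simp_all [twoDimGens]

end Uq

/-- the category of finite-dimensional `U_q(sl*₂)`-modules is not semisimple:
there is a two-dimensional `U_q(sl*₂)`-module which is not a direct sum of simple modules. -/
theorem stmt5 (q : ℂ) (hq : NotRootOfUnity q) :
    ∃ (M : Type) (_ : AddCommGroup M) (_ : Module ℂ M) (_ : Module (Uq q 0 1) M)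
      (_ : IsScalarTower ℂ (Uq q 0 1) M),
      Module.finrank ℂ M = 2 ∧ ¬ IsSemisimpleModule (Uq q 0 1) M := by
  let _ : Module (Uq q 0 1) (ℂ × ℂ) := Module.compHom _ (Uq.twoDimRep hq.1).toRingHom
  have smul_def (u : Uq q 0 1) (p : ℂ × ℂ) : u • p = Uq.twoDimRep hq.1 u p := rfl
  refine ⟨ℂ × ℂ, inferInstance, inferInstance, inferInstance,
    ⟨fun c u p ↦ by simp only [smul_def, map_smul, LinearMap.smul_apply]⟩, by simp, ?_⟩
  let N : Submodule (Uq q 0 1) (ℂ × ℂ) :=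
    { (LinearMap.ker (LinearMap.fst ℂ ℂ ℂ)).toAddSubmonoid with
      smul_mem' := fun u _ hp ↦ Uq.ker_fst_mem_invtSubmodule_twoDimRep hq.1 u hp }
  have mem_N (p : ℂ × ℂ) : p ∈ N ↔ p.1 = 0 := Iff.rfl
  refine not_isSemisimpleModule_of_smul_mem (N := N) ?_ (genE q 0 1) ?_ ?_
  · intro h
    simpa [mem_N] using h.ge (Submodule.mem_top (x := ((1 : ℂ), (0 : ℂ))))
  · simp [mem_N, smul_def]
  · intro x hx
    simpa [mem_N, smul_def] using congrArg Prod.snd hx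

end
end

section
/- For c_q(n) = (q^{(n+1)m} + q^{−(n+1)m})/(qᵐ − q⁻ᵐ)² with n, n′ nonnegative integers, if c_q(n) = c_q(n′) then n = n′. -/
noncomputable section

/-- The Casimir scalar `c_q(n) = (q^{(n+1)m} + q^{-(n+1)m})/(qᵐ - q⁻ᵐ)²`. -/
def casimirScalar (q : ℂ) (m n : ℕ) : ℂ :=
  (q ^ (((n : ℤ) + 1) * m) + q ^ (-(((n : ℤ) + 1) * m))) / (q ^ (m : ℤ) - q ^ (-(m : ℤ))) ^ 2

lemma aux_eq (q : ℂ) (hq0 : q ≠ 0)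
    (hpow : ∀ n : ℕ, 0 < n → q ^ n ≠ 1) (m : ℕ) (hm : 0 < m) (n n' : ℕ)
    (hle : n' ≤ n)
    (h : casimirScalar q m n = casimirScalar q m n') : n = n' := by
  have hD : q ^ (m : ℤ) - q ^ (-(m : ℤ)) ≠ 0 := by
    intro hd
    have h1 : q ^ (m : ℤ) = q ^ (-(m : ℤ)) := sub_eq_zero.mp hd
    have h2 : q ^ (2 * m) = 1 := by
      have : q ^ (m : ℤ) * q ^ (m : ℤ) = 1 := by
        nth_rewrite 2 [h1]
        rw [← zpow_add₀ hq0]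
        simp
      rw [zpow_natCast, ← pow_add] at this
      rwa [two_mul]
    exact hpow (2 * m) (by positivity) h2
  simp only [casimirScalar, zpow_neg] at h
  set A : ℤ := ((n : ℤ) + 1) * m with hA
  set B : ℤ := ((n' : ℤ) + 1) * m with hB
  set x := q ^ A with hxdef
  set y := q ^ B with hydef
  have hx : x ≠ 0 := zpow_ne_zero _ hq0
  have hy : y ≠ 0 := zpow_ne_zero _ hq0
  rw [zpow_neg] at hD
  have hnum : x + x⁻¹ = y + y⁻¹ := (div_left_inj' (pow_ne_zero 2 hD)).mp h
  have key : (x - y) * (x * y - 1) = 0 := by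
    have h' : x * x * y + y = y * y * x + x := by
      field_simp at hnum
      linear_combination hnum
    ring_nf
    linear_combination h'
  rcases mul_eq_zero.mp key with hxy | hxy
  · -- x = y
    by_contra hne
    have hlt : n' < n := lt_of_le_of_ne hle (Ne.symm hne)
    have hpos : 0 < (n - n') * m := Nat.mul_pos (Nat.sub_pos_of_lt hlt) hm
    have hAB : A - B = (((n - n') * m : ℕ) : ℤ) := by
      push_cast [Nat.cast_sub hle]
      ring
    have : q ^ ((n - n') * m) = 1 := by
      have := sub_eq_zero.mp hxy
      have h3 : q ^ (A - B) = 1 := by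
        rw [zpow_sub₀ hq0, hxdef, hydef] at *
        rw [this, div_self hy]
      rwa [hAB, zpow_natCast] at h3
    exact hpow _ hpos this
  · -- x * y = 1
    exfalso
    have hAB : A + B = (((n + n' + 2) * m : ℕ) : ℤ) := by push_cast; ring
    have : q ^ ((n + n' + 2) * m) = 1 := by
      have h3 : q ^ (A + B) = 1 := by
        rw [zpow_add₀ hq0, ← hxdef, ← hydef]
        exact sub_eq_zero.mp hxy
      rwa [hAB, zpow_natCast] at h3
    exact hpow _ (by positivity) this

/-- if `c_q(n) = c_q(n')` for nonnegative integers `n, n'`, then `n = n'`. -/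
theorem stmt16 (q : ℂ) (m : ℕ) (hm : 0 < m) (hq : NotRootOfUnity q) (n n' : ℕ)
    (h : casimirScalar q m n = casimirScalar q m n') : n = n' := by
  obtain ⟨hq0, hpow⟩ := hq
  rcases le_total n' n with hle | hle
  · exact aux_eq q hq0 hpow m hm n n' hle h
  · exact (aux_eq q hq0 hpow m hm n' n hle h.symm).symm

end
end
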